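/- arXiv:2311.01544 — 4 statements merged into one kernel-verified Lean document; each statement's English description precedes it below -/
import Mathlib

section
/- For every sequence length N ≥ 1, every vocabulary size |V| ≥ 2, every token sequence y ∈ V^N, and every ε > 0, there exist logit matrices l, l' ∈ ℝ^{N×|V|} such that |PPL(y,l,1) − PPL(y,l',1)| < ε, while at every sequence position i the (unique) argmax over the vocabulary of the row l_i differs from the (unique) argmax of the row l'_i; in particular the share-of-divergent-tokens metric M_SDT(l,l',y_{:1},N) attains its maximal value N. (Discontinuity of greedy decoding under the perplexity metric.) -/
/-- Softmax of a logit row: probability assigned to token `j`. -/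
noncomputable def softmaxRow {V : ℕ} (r : Fin V → ℝ) (j : Fin V) : ℝ :=
  Real.exp (r j) / ∑ k, Real.exp (r k)

/-- `j` is the unique argmax of the row `r`. -/
def IsUniqueArgmax {V : ℕ} (r : Fin V → ℝ) (j : Fin V) : Prop :=
  ∀ k, k ≠ j → r k < r j

/-- Perplexity of the sequence `y` under logits `l`, prefix length `n`, total length `N`:
`PPL(y,l,n) = exp(-(1/(N-n)) ∑_{i=n}^{N-1} log softmax(l)_{i, y_{i+1}})`. -/
noncomputable def PPL {V : ℕ} (y : ℕ → Fin V) (l : ℕ → Fin V → ℝ) (n N : ℕ) : ℝ :=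
  Real.exp (-(1 / ((N : ℝ) - n)) *
    ∑ i ∈ Finset.Ico n N, Real.log (softmaxRow (l i) (y (i + 1))))

/-- Greedy decoding from logits with argmax selection `a`: the prefix `y_{:n}` is kept,
and for positions `i > n` the token is the argmax of row `i - 1`. -/
def greedy {V : ℕ} (y : ℕ → Fin V) (a : ℕ → Fin V) (n : ℕ) : ℕ → Fin V :=
  fun i => if i ≤ n then y i else a (i - 1)

lemma expRowSum {V : ℕ} (hV : 2 ≤ V) (δ : ℝ) (t : Fin V) :
    ∑ k, Real.exp (if k = t then δ else 0) = Real.exp δ + ((V : ℝ) - 1) := by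
  have h : ∀ k : Fin V, Real.exp (if k = t then δ else 0)
      = (if k = t then Real.exp δ - 1 else 0) + 1 := by
    intro k; split <;> simp [Real.exp_zero]
  simp_rw [h]
  rw [Finset.sum_add_distrib, Finset.sum_ite_eq' Finset.univ t (fun _ => Real.exp δ - 1)]
  simp [Finset.card_univ]
  ring

/-- Discontinuity of greedy decoding under the perplexity metric: for every `N ≥ 1`,
`|V| ≥ 2`, token sequence `y` and `ε > 0` there are logits `l, l'` (with unique
row-argmaxes `a, a'`) whose perplexities on `y` (with prefix 1) differ by less than `ε`,
yet the argmaxes differ at every sequence position, so the share-of-divergent-tokens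
metric `M_SDT(l, l', y_{:1}, N)` attains its maximal value `N`. -/
theorem ppl_discontinuity (N V : ℕ) (hN : 1 ≤ N) (hV : 2 ≤ V)
    (y : ℕ → Fin V) (ε : ℝ) (hε : 0 < ε) :
    ∃ (l l' : ℕ → Fin V → ℝ) (a a' : ℕ → Fin V),
      (∀ i, IsUniqueArgmax (l i) (a i)) ∧
      (∀ i, IsUniqueArgmax (l' i) (a' i)) ∧
      |PPL y l 1 N - PPL y l' 1 N| < ε ∧
      (∀ i ∈ Finset.Icc 1 N, a i ≠ a' i) ∧
      ((Finset.Icc 1 N).filter (fun i => a' i ≠ greedy y a 1 (i + 1))).card = N := by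
  have hV0 : (0:ℕ) < V := by omega
  set t0 : Fin V := ⟨0, by omega⟩ with ht0
  set t1 : Fin V := ⟨1, by omega⟩ with ht1
  have ht : t0 ≠ t1 := by simp [ht0, ht1, Fin.ext_iff]
  have hVR : (2:ℝ) ≤ (V:ℝ) := by exact_mod_cast hV
  set E : ℝ := Real.exp 1 + V with hE
  have hEpos : 0 < E := by positivity
  set δ : ℝ := min 1 (ε / (2 * E)) with hδdef
  have hδpos : 0 < δ := lt_min one_pos (by positivity)
  have hδ1 : δ ≤ 1 := min_le_left _ _
  have hδE : δ ≤ ε / (2 * E) := min_le_right _ _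
  set S : ℝ := Real.exp δ + ((V:ℝ) - 1) with hSdef
  have hSpos : 0 < S := by
    have := Real.exp_pos δ; rw [hSdef]; linarith
  have hSE : S ≤ E := by
    have h1 : Real.exp δ ≤ Real.exp 1 := Real.exp_le_exp.mpr hδ1
    rw [hSdef, hE]; linarith
  -- log of softmax of the special rows
  have hlog : ∀ (t j : Fin V),
      Real.log (softmaxRow (fun k => if k = t then δ else 0) j)
        = (if j = t then δ else 0) - Real.log S := by
    intro t j
    unfold softmaxRow
    rw [expRowSum hV δ t, ← hSdef,
      Real.log_div (Real.exp_ne_zero _) (ne_of_gt hSpos), Real.log_exp]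
  -- PPL of the special logit matrices
  have hPPL : ∀ (t : Fin V), PPL y (fun _ k => if k = t then δ else 0) 1 N
      = Real.exp (-(1 / ((N:ℝ) - 1)) *
          ((∑ i ∈ Finset.Ico 1 N, (if y (i+1) = t then δ else 0))
            - ((N:ℝ) - 1) * Real.log S)) := by
    intro t
    unfold PPL
    rw [Finset.sum_congr rfl (fun i _ => hlog t (y (i+1))), Finset.sum_sub_distrib,
      Finset.sum_const, Nat.card_Ico, nsmul_eq_mul, Nat.cast_sub hN]
    norm_num
  -- bound on the PPL values
  have hbound : 1 < N → ∀ (t : Fin V), S * Real.exp (-δ)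
      ≤ PPL y (fun _ k => if k = t then δ else 0) 1 N
      ∧ PPL y (fun _ k => if k = t then δ else 0) 1 N ≤ S := by
    intro h2 t
    rw [hPPL t]
    have hm : (0:ℝ) < (N:ℝ) - 1 := by
      have : (2:ℝ) ≤ (N:ℝ) := by exact_mod_cast h2
      linarith
    set m : ℝ := (N:ℝ) - 1 with hm'
    set T : ℝ := ∑ i ∈ Finset.Ico 1 N, (if y (i+1) = t then δ else 0) with hT
    have hT0 : 0 ≤ T := Finset.sum_nonneg fun i _ => by split <;> simp [hδpos.le]
    have hTle : T ≤ m * δ := by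
      calc T ≤ ∑ i ∈ Finset.Ico 1 N, δ :=
            Finset.sum_le_sum fun i _ => by split <;> simp [hδpos.le]
        _ = ((N - 1 : ℕ) : ℝ) * δ := by rw [Finset.sum_const, Nat.card_Ico, nsmul_eq_mul]
        _ = m * δ := by rw [hm', Nat.cast_sub hN]; norm_num
    have key : -(1 / m) * (T - m * Real.log S) = Real.log S - T / m := by
      field_simp
      ring
    rw [key]
    have h1 : Real.log S - T / m ≤ Real.log S := by
      have : 0 ≤ T / m := div_nonneg hT0 hm.le
      linarith
    have h2' : Real.log S - δ ≤ Real.log S - T / m := by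
      have : T / m ≤ δ := by
        rw [div_le_iff₀ hm]; linarith [hTle]
      linarith
    constructor
    · calc S * Real.exp (-δ) = Real.exp (Real.log S - δ) := by
            rw [Real.exp_sub, Real.exp_log hSpos, Real.exp_neg, div_eq_mul_inv]
        _ ≤ _ := Real.exp_le_exp.mpr h2'
    · calc Real.exp (Real.log S - T / m) ≤ Real.exp (Real.log S) :=
            Real.exp_le_exp.mpr h1
        _ = S := Real.exp_log hSpos
  refine ⟨fun _ k => if k = t0 then δ else 0, fun _ k => if k = t1 then δ else 0,
    fun _ => t0, fun _ => t1, ?_, ?_, ?_, ?_, ?_⟩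
  · intro i k hk; simpa [if_neg hk] using hδpos
  · intro i k hk; simpa [if_neg hk] using hδpos
  · -- perplexity difference bound
    rcases eq_or_lt_of_le hN with h1 | h2
    · -- N = 1: both perplexities are 1
      have hone : ∀ l : ℕ → Fin V → ℝ, PPL y l 1 N = 1 := by
        intro l
        unfold PPL
        rw [← h1]
        simp
      rw [hone, hone, sub_self, abs_zero]
      exact hε
    obtain ⟨hlo0, hhi0⟩ := hbound h2 t0
    obtain ⟨hlo1, hhi1⟩ := hbound h2 t1
    have hdiff : |PPL y (fun _ k => if k = t0 then δ else 0) 1 N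
        - PPL y (fun _ k => if k = t1 then δ else 0) 1 N| ≤ S - S * Real.exp (-δ) := by
      rw [abs_le]; constructor <;> linarith
    have h1mexp : 1 - Real.exp (-δ) ≤ δ := by
      have := Real.add_one_le_exp (-δ); linarith
    have : S - S * Real.exp (-δ) ≤ S * δ := by
      have : S * (1 - Real.exp (-δ)) ≤ S * δ := by
        apply mul_le_mul_of_nonneg_left h1mexp hSpos.le
      linarith [this]
    have hfin : S * δ < ε := by
      calc S * δ ≤ E * δ := mul_le_mul_of_nonneg_right hSE hδpos.le
        _ ≤ E * (ε / (2 * E)) := mul_le_mul_of_nonneg_left hδE hEpos.le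
        _ = ε / 2 := by field_simp
        _ < ε := by linarith
    linarith
  · intro i _; exact ht
  · rw [Finset.filter_true_of_mem, Nat.card_Icc]
    · omega
    · intro i hi
      simp only [Finset.mem_Icc] at hi
      have : ¬ (i + 1 ≤ 1) := by omega
      simp only [greedy, if_neg this]
      exact Ne.symm ht
end

section
/- For all logit matrices l, l' ∈ ℝ^{N×|V|}, every token sequence y ∈ V^N, and every prefix length n < N (with all row-argmaxes of l unique), the following upper bound holds: M_SDT(l,l',y_{:n},N) ≤ ((N−n)/log 2) · log M_DPPL(l,l',y_{:n},N), where M_SDT counts the positions i ≥ n at which the argmax of row i of l' disagrees with the greedily decoded token G(l,y_{:n},N)_{i+1}, and M_DPPL is the perplexity of l' evaluated on the greedy completion generated from l. -/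
/-- Upper bound of the share-of-divergent-tokens metric by the divergent perplexity:
`M_SDT(l, l', y_{:n}, N) ≤ ((N - n) / log 2) · log M_DPPL(l, l', y_{:n}, N)`,
where `M_SDT` counts positions `n ≤ i ≤ N-1` at which the argmax of row `i` of `l'`
disagrees with the greedy completion `G(l, y_{:n}, N)_{i+1}`, and
`M_DPPL(l, l', y_{:n}, N) = PPL(G(l, y_{:n}, N), l', n)`. -/
theorem sdt_le_dppl (N V n : ℕ) (hn : n < N)
    (l l' : ℕ → Fin V → ℝ) (y : ℕ → Fin V) (a a' : ℕ → Fin V)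
    (ha : ∀ i, IsUniqueArgmax (l i) (a i))
    (ha' : ∀ i, IsUniqueArgmax (l' i) (a' i)) :
    (((Finset.Ico n N).filter (fun i => a' i ≠ greedy y a n (i + 1))).card : ℝ)
      ≤ ((N : ℝ) - n) / Real.log 2 * Real.log (PPL (greedy y a n) l' n N) := by
  haveI : Nonempty (Fin V) := ⟨y 0⟩
  set g := greedy y a n with hg
  set p : ℕ → ℝ := fun i => softmaxRow (l' i) (g (i + 1)) with hp
  have hS : ∀ i, 0 < ∑ k, Real.exp (l' i k) := fun i =>
    Finset.sum_pos (fun k _ => Real.exp_pos _) Finset.univ_nonempty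
  have hppos : ∀ i, 0 < p i := fun i => div_pos (Real.exp_pos _) (hS i)
  have hple1 : ∀ i, p i ≤ 1 := by
    intro i
    rw [hp]
    unfold softmaxRow
    rw [div_le_one (hS i)]
    exact Finset.single_le_sum (fun k _ => (Real.exp_pos _).le) (Finset.mem_univ _)
  have hlog2 : 0 < Real.log 2 := Real.log_pos (by norm_num)
  have hdiv : ∀ i, a' i ≠ g (i + 1) → p i ≤ 1 / 2 := by
    intro i hne
    have hlt : l' i (g (i + 1)) < l' i (a' i) := ha' i _ (fun h => hne h.symm)
    have hel : Real.exp (l' i (g (i + 1))) ≤ Real.exp (l' i (a' i)) :=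
      Real.exp_le_exp.mpr hlt.le
    have hpair : Real.exp (l' i (g (i + 1))) + Real.exp (l' i (a' i))
        ≤ ∑ k, Real.exp (l' i k) := by
      have := Finset.sum_le_univ_sum_of_nonneg
        (s := {g (i + 1), a' i}) (f := fun k => Real.exp (l' i k))
        (fun k => (Real.exp_pos _).le)
      rwa [Finset.sum_pair (fun h => hne h.symm)] at this
    rw [hp]
    unfold softmaxRow
    rw [div_le_div_iff₀ (hS i) (by norm_num)]
    nlinarith [Real.exp_pos (l' i (g (i + 1)))]
  have hterm : ∀ i ∈ (Finset.Ico n N).filter (fun i => a' i ≠ g (i + 1)),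
      Real.log 2 ≤ -Real.log (p i) := by
    intro i hi
    have hpi := hdiv i (Finset.mem_filter.mp hi).2
    have := Real.log_le_log (hppos i) hpi
    rw [show (1:ℝ)/2 = 2⁻¹ by norm_num, Real.log_inv] at this
    linarith
  have hcard : (((Finset.Ico n N).filter (fun i => a' i ≠ g (i + 1))).card : ℝ) * Real.log 2
      ≤ ∑ i ∈ (Finset.Ico n N).filter (fun i => a' i ≠ g (i + 1)), -Real.log (p i) := by
    have := Finset.card_nsmul_le_sum _ _ _ hterm
    simpa [nsmul_eq_mul] using this
  have hmono : ∑ i ∈ (Finset.Ico n N).filter (fun i => a' i ≠ g (i + 1)), -Real.log (p i)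
      ≤ ∑ i ∈ Finset.Ico n N, -Real.log (p i) := by
    apply Finset.sum_le_sum_of_subset_of_nonneg (Finset.filter_subset _ _)
    intro i _ _
    have := Real.log_nonpos (hppos i).le (hple1 i)
    linarith
  have hN : (0:ℝ) < (N : ℝ) - n := by
    have : (n:ℝ) < N := by exact_mod_cast hn
    linarith
  have hRHS : ((N : ℝ) - n) / Real.log 2 * Real.log (PPL g l' n N)
      = (∑ i ∈ Finset.Ico n N, -Real.log (p i)) / Real.log 2 := by
    unfold PPL
    rw [Real.log_exp, Finset.sum_neg_distrib]
    field_simp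
    ring
  rw [hRHS]
  rw [le_div_iff₀ hlog2]
  exact hcard.trans hmono
end

section
/- Let l ∈ ℝ^{N×|V|} with |V| ≥ 2 be a logit matrix whose entries within each row are pairwise distinct, and suppose that for some δ > 0 every row satisfies m_1(l)_i − m_2(l)_i < δ, where m_1(l)_i and m_2(l)_i denote the largest and second-largest entries of row i. Define l' by adding δ to the entry of each row at the position a_2(l)_i of the second-largest value and leaving all other entries unchanged. Then for every row i the argmax of l'_i equals a_2(l)_i and hence differs from the argmax a_1(l)_i of l_i, and moreover ‖l − l'‖_∞ ≤ δ. -/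
/-- Let `l ∈ ℝ^{N×|V|}` (`|V| ≥ 2`) have pairwise distinct entries within each row, with
`a1 i`, `a2 i` the indices of the largest and second-largest entries of row `i`, and
suppose `m1(l)_i - m2(l)_i < δ` for some `δ > 0` in every row. Adding `δ` to the entry at
position `a2 i` of each row (leaving the rest unchanged) makes `a2 i` the (unique) argmax
of every row of the perturbed matrix `l'`, which hence differs from the argmax `a1 i` of
`l`; moreover `‖l - l'‖_∞ ≤ δ` in the entrywise supremum norm. -/
theorem perturbation_flips_argmax (N V : ℕ) (hV : 2 ≤ V)
    (l : Fin N → Fin V → ℝ)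
    (hdist : ∀ i, ∀ j k : Fin V, j ≠ k → l i j ≠ l i k)
    (a1 a2 : Fin N → Fin V)
    (hne : ∀ i, a1 i ≠ a2 i)
    (h1 : ∀ i, ∀ k, k ≠ a1 i → l i k < l i (a1 i))
    (h2 : ∀ i, ∀ k, k ≠ a1 i → k ≠ a2 i → l i k < l i (a2 i))
    (δ : ℝ) (hδ : 0 < δ)
    (hgap : ∀ i, l i (a1 i) - l i (a2 i) < δ) :
    (∀ i, IsUniqueArgmax (fun j => if j = a2 i then l i j + δ else l i j) (a2 i)) ∧
    (∀ i, a2 i ≠ a1 i) ∧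
    ‖l - (fun i j => if j = a2 i then l i j + δ else l i j)‖ ≤ δ := by
  refine ⟨?_, fun i => (hne i).symm, ?_⟩
  · intro i k hk
    beta_reduce; rw [if_neg hk, if_pos rfl]
    by_cases hka : k = a1 i
    · subst hka; linarith [hgap i]
    · linarith [h2 i k hka hk]
  · apply pi_norm_le_iff_of_nonneg hδ.le |>.2
    intro i
    apply pi_norm_le_iff_of_nonneg hδ.le |>.2
    intro j
    simp only [Pi.sub_apply]
    by_cases hj : j = a2 i <;> simp [hj, abs_of_nonneg hδ.le, hδ.le]
end

section
/- For all logit matrices l, l' ∈ ℝ^{N×|V|} (with unique row-argmaxes), every token sequence y ∈ V^N, and every prefix length n ≤ N: 0 ≤ M_FDT(l,l',y_{:n},N) ≤ N − n, and M_FDT(l,l',y_{:n},N) = N − n holds if and only if the greedy decodings agree, i.e., G(l,y_{:n},N) = G(l',y_{:n},N). Moreover M_FDT is symmetric: M_FDT(l,l',y_{:n},N) = M_FDT(l',l,y_{:n},N). -/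
/-- First divergent token of the sequence `z` with respect to logits with argmax
selection `a''` and prefix length `n`:
`FDT(z, l'', n) = min { i ≥ n : argmax_j l''_{ij} ≠ z_{i+1} } - n`, with the convention
that the minimum equals `N` when the set is empty. -/
noncomputable def FDT {V : ℕ} (z : ℕ → Fin V) (a'' : ℕ → Fin V) (n N : ℕ) : ℕ :=
  sInf ({i | n ≤ i ∧ a'' i ≠ z (i + 1)} ∪ {N}) - n

/-- Basic properties of the first-divergent-token metric
`M_FDT(l, l', y_{:n}, N) = FDT(G(l, y_{:n}, N), l', n)`:
it lies in `[0, N - n]`, it equals `N - n` iff the greedy decodings of `l` and `l'`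
agree up to position `N`, and it is symmetric in `l` and `l'`. -/
theorem fdt_properties (N V n : ℕ) (hn : n ≤ N)
    (l l' : ℕ → Fin V → ℝ) (y : ℕ → Fin V) (a a' : ℕ → Fin V)
    (ha : ∀ i, IsUniqueArgmax (l i) (a i))
    (ha' : ∀ i, IsUniqueArgmax (l' i) (a' i)) :
    0 ≤ FDT (greedy y a n) a' n N ∧
    FDT (greedy y a n) a' n N ≤ N - n ∧
    (FDT (greedy y a n) a' n N = N - n ↔
      ∀ i ≤ N, greedy y a n i = greedy y a' n i) ∧
    FDT (greedy y a n) a' n N = FDT (greedy y a' n) a n N := by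
  have hset : ∀ (b b' : ℕ → Fin V),
      {i | n ≤ i ∧ b' i ≠ greedy y b n (i + 1)} = {i | n ≤ i ∧ b' i ≠ b i} := by
    intro b b'
    ext i
    simp only [Set.mem_setOf_eq, greedy, and_congr_right_iff]
    intro hi
    rw [if_neg (by omega)]
    simp
  have h1 : FDT (greedy y a n) a' n N = sInf ({i | n ≤ i ∧ a' i ≠ a i} ∪ {N}) - n := by
    rw [FDT, hset]
  have h2 : FDT (greedy y a' n) a n N = sInf ({i | n ≤ i ∧ a i ≠ a' i} ∪ {N}) - n := by
    rw [FDT, hset]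
  have hsetsym : {i | n ≤ i ∧ a' i ≠ a i} = {i | n ≤ i ∧ a i ≠ a' i} := by
    ext i; simp [ne_comm]
  set S := {i | n ≤ i ∧ a' i ≠ a i} ∪ {N} with hS
  have hNS : N ∈ S := Or.inr rfl
  have hle : sInf S ≤ N := Nat.sInf_le hNS
  have hge : n ≤ sInf S := by
    apply le_csInf ⟨N, hNS⟩
    rintro b (⟨hb, -⟩ | rfl)
    · exact hb
    · exact hn
  refine ⟨Nat.zero_le _, ?_, ?_, ?_⟩
  · rw [h1]; omega
  · rw [h1]
    constructor
    · intro heq i hi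
      by_cases hin : i ≤ n
      · simp [greedy, hin]
      · have hsinf : sInf S = N := by omega
        simp only [greedy, if_neg hin]
        by_contra hne
        have hmem : i - 1 ∈ S := Or.inl ⟨by omega, fun h => hne (h.symm)⟩
        have := Nat.sInf_le hmem
        omega
    · intro hagree
      have hgeN : N ≤ sInf S := by
        apply le_csInf ⟨N, hNS⟩
        rintro b (⟨hb, hne⟩ | rfl)
        · by_contra hlt
          push_neg at hlt
          have := hagree (b + 1) (by omega)
          simp only [greedy, if_neg (by omega : ¬ b + 1 ≤ n), Nat.add_sub_cancel] at this
          exact hne this.symm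
        · exact le_rfl
      omega
  · rw [h1, h2, hS, hsetsym]
end
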